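/- There exists a finite rotation-puzzle instance 𝒜 over the three-color tile set T_3 (the CROSS subpuzzle, crossing two adjacent wires) with two designated input boundary edges (a left one and a right one) at its bottom and two designated output boundary edges (a left one and a right one) at its top, such that for each pair of colors (c₁, c₂) ∈ {blue, red}² the instance 𝒜 has exactly one solution whose colors at the left and right input edges are c₁ and c₂ respectively, and this solution has color c₂ at the left output edge and color c₁ at the right output edge (i.e., the two input colors are swapped at the outputs). -/

import Mathlib

/-- The three Tantrix colors used in the three-color tile set. -/
inductive Color where
  | red
  | yellow
  | blue
deriving DecidableEq

/-- A tile is its clockwise color sequence: a word of length 6 over the colors,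
edges indexed `0, …, 5` clockwise. -/
abbrev Tile := Fin 6 → Color

/-- Cyclic rotation of a tile by `k` steps: edge `i` of the rotated tile carries the
color of edge `i + k` of the original sequence. -/
def rotTile (k : Fin 6) (t : Tile) : Tile := fun i => t (i + k)

open Color in
/-- The three-color tile set `T₃`, consisting of the 14 color sequences
yrrbby, ryybbr, yrrybb, ryyrbb, brrbyy, yrbybr, rbyryb, brybyr, brbyyr, bybrry,
ryrbby, rbryyb, ybyrrb, yrybbr. -/
def T3 : Set Tile :=
  { ![yellow,red,red,blue,blue,yellow],
    ![red,yellow,yellow,blue,blue,red],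
    ![yellow,red,red,yellow,blue,blue],
    ![red,yellow,yellow,red,blue,blue],
    ![blue,red,red,blue,yellow,yellow],
    ![yellow,red,blue,yellow,blue,red],
    ![red,blue,yellow,red,yellow,blue],
    ![blue,red,yellow,blue,yellow,red],
    ![blue,red,blue,yellow,yellow,red],
    ![blue,yellow,blue,red,red,yellow],
    ![red,yellow,red,blue,blue,yellow],
    ![red,blue,red,yellow,yellow,blue],
    ![yellow,blue,yellow,red,red,blue],
    ![yellow,red,yellow,blue,blue,red] }

/-- The six neighbor offsets of the hexagonal layout of `ℤ²`, listed clockwise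
starting from straight up; edge `i` of a tile at `x` is the edge shared with the
neighboring point `x + dirs i`, and opposite directions differ by `3` (mod 6).
Two points are neighbors exactly if their difference is one of these offsets. -/
def dirs : Fin 6 → ℤ × ℤ := ![(0,1), (1,1), (1,0), (0,-1), (-1,-1), (-1,0)]

/-- A finite rotation-puzzle instance over the tile set `T3`:
a function from a finite set of points of `ℤ²` to `T3`. -/
structure Puzzle where
  tiles : ℤ × ℤ → Option Tile
  finite : {x | tiles x ≠ none}.Finite
  memT3 : ∀ x t, tiles x = some t → t ∈ T3

/-- `sol` is a solution of the instance `P`: it assigns to each occupied point a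
cyclic rotation of the tile placed there, such that for every pair of neighboring
occupied points the two assigned sequences give the same color to their joint edge
(edge `d` of the tile at `x` is glued to edge `d + 3` of the tile at `x + dirs d`). -/
def IsSolution (P : Puzzle) (sol : ℤ × ℤ → Option Tile) : Prop :=
  (∀ x, (P.tiles x = none → sol x = none) ∧
    (∀ t, P.tiles x = some t → ∃ k : Fin 6, sol x = some (rotTile k t))) ∧
  (∀ (x : ℤ × ℤ) (d : Fin 6) (s s' : Tile),
    sol x = some s → sol (x + dirs d) = some s' → s d = s' (d + 3))

/-- `(x, d)` is a boundary edge of `P`: the point `x` is occupied and its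
neighbor in direction `d` is not. -/
def IsBoundary (P : Puzzle) (x : ℤ × ℤ) (d : Fin 6) : Prop :=
  P.tiles x ≠ none ∧ P.tiles (x + dirs d) = none

/-- The solution `sol` has color `c` at the edge in direction `d` of the tile at `x`. -/
def SolColor (sol : ℤ × ℤ → Option Tile) (x : ℤ × ℤ) (d : Fin 6) (c : Color) : Prop :=
  ∃ s, sol x = some s ∧ s d = c


/-! All five cells carry the tile `yrrybb`, three in a bottom row and two above them. With a
single tile type, a solution is just a rotation map on the cells under which neighbors agree on
their joint edges, so the puzzle is a finite constraint problem with one `Fin 6` unknown per cell;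
for each pair of input colors it has exactly one solution, which `decide` finds and certifies. -/

open Set

namespace Puzzle

def uniform (t : Tile) (ht : t ∈ T3) (S : Finset (ℤ × ℤ)) : Puzzle where
  tiles x := if x ∈ S then some t else none
  finite := S.finite_toSet.subset fun x hx => by_contra fun h => hx (if_neg h)
  memT3 x s hs := by
    split_ifs at hs
    cases hs
    exact ht

theorem isBoundary_uniform_iff {t : Tile} {ht : t ∈ T3} {S : Finset (ℤ × ℤ)} {x : ℤ × ℤ}
    {d : Fin 6} : IsBoundary (uniform t ht S) x d ↔ x ∈ S ∧ x + dirs d ∉ S := by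
  simp [IsBoundary, uniform]

end Puzzle

section Uniform

variable {t : Tile} {S : Finset (ℤ × ℤ)} {k k' : ℤ × ℤ → Fin 6}

def rotatedSol (t : Tile) (S : Finset (ℤ × ℤ)) (k : ℤ × ℤ → Fin 6) : ℤ × ℤ → Option Tile :=
  fun x => if x ∈ S then some (rotTile (k x) t) else none

def Glued (t : Tile) (S : Finset (ℤ × ℤ)) (k : ℤ × ℤ → Fin 6) : Prop :=
  ∀ x ∈ S, ∀ d : Fin 6, x + dirs d ∈ S → rotTile (k x) t d = rotTile (k (x + dirs d)) t (d + 3)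

instance : DecidablePred (Glued t S) := fun k => by unfold Glued; infer_instance

theorem glued_congr (h : EqOn k k' S) : Glued t S k ↔ Glued t S k' :=
  forall₂_congr fun _ hx => forall_congr' fun _ => imp_congr_right fun hy => by
    rw [h hx, h hy]

theorem rotatedSol_congr (h : EqOn k k' S) : rotatedSol t S k = rotatedSol t S k' := by
  funext x
  by_cases hx : x ∈ S
  · simp [rotatedSol, hx, h hx]
  · simp [rotatedSol, hx]

theorem solColor_rotatedSol_iff {x : ℤ × ℤ} {d : Fin 6} {c : Color} :
    SolColor (rotatedSol t S k) x d c ↔ x ∈ S ∧ rotTile (k x) t d = c := by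
  by_cases hx : x ∈ S <;> simp [SolColor, rotatedSol, hx]

variable {ht : t ∈ T3}

theorem isSolution_rotatedSol (h : Glued t S k) :
    IsSolution (Puzzle.uniform t ht S) (rotatedSol t S k) := by
  refine ⟨fun x => ⟨fun hx => ?_, fun s hs => ⟨k x, ?_⟩⟩, fun x d s s' hs hs' => ?_⟩
  · simpa [Puzzle.uniform, rotatedSol] using hx
  · simp only [Puzzle.uniform] at hs
    split_ifs at hs with hx
    cases hs
    exact if_pos hx
  · simp only [rotatedSol] at hs hs'
    split_ifs at hs hs' with hx hy
    cases hs
    cases hs'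
    exact h x hx d hy

theorem IsSolution.exists_eq_rotatedSol {sol : ℤ × ℤ → Option Tile}
    (h : IsSolution (Puzzle.uniform t ht S) sol) : ∃ k, Glued t S k ∧ sol = rotatedSol t S k := by
  have hrot : ∀ x, ∃ r : Fin 6, x ∈ S → sol x = some (rotTile r t) := fun x => by
    by_cases hx : x ∈ S
    · obtain ⟨r, hr⟩ := (h.1 x).2 t (if_pos hx)
      exact ⟨r, fun _ => hr⟩
    · exact ⟨0, fun h' => absurd h' hx⟩
  choose k hk using hrot
  refine ⟨k, fun x hx d hy => h.2 x d _ _ (hk x hx) (hk _ hy), funext fun x => ?_⟩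
  by_cases hx : x ∈ S
  · rw [hk x hx, rotatedSol, if_pos hx]
  · rw [(h.1 x).1 (if_neg hx), rotatedSol, if_neg hx]

end Uniform

namespace Cross

open Color

def yrrybb : Tile := ![yellow, red, red, yellow, blue, blue]

theorem yrrybb_mem_T3 : yrrybb ∈ T3 := by
  simp [T3, yrrybb]

def cells : Finset (ℤ × ℤ) := {(0, 0), (1, 0), (2, 0), (1, 1), (2, 1)}

def puzzle : Puzzle := Puzzle.uniform yrrybb yrrybb_mem_T3 cells

def rot (r₁ r₂ r₃ r₄ r₅ : Fin 6) (x : ℤ × ℤ) : Fin 6 :=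
  if x = (0, 0) then r₁ else if x = (1, 0) then r₂ else if x = (2, 0) then r₃
  else if x = (1, 1) then r₄ else r₅

theorem eqOn_rot (k : ℤ × ℤ → Fin 6) :
    EqOn k (rot (k (0, 0)) (k (1, 0)) (k (2, 0)) (k (1, 1)) (k (2, 1))) cells := by
  intro x hx
  simp only [cells, Finset.coe_insert, Finset.coe_singleton, mem_insert_iff,
    mem_singleton_iff] at hx
  rcases hx with rfl | rfl | rfl | rfl | rfl <;> simp [rot]

theorem existsUnique_solution {r₁ r₂ r₃ r₄ r₅ : Fin 6} {c₁ c₂ : Color}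
    (hglued : Glued yrrybb cells (rot r₁ r₂ r₃ r₄ r₅))
    (hcolors : rotTile r₁ yrrybb 3 = c₁ ∧ rotTile r₂ yrrybb 3 = c₂ ∧
      rotTile r₄ yrrybb 0 = c₂ ∧ rotTile r₅ yrrybb 0 = c₁)
    (hunique : ∀ s₁ s₂ s₃ s₄ s₅ : Fin 6, rotTile s₁ yrrybb 3 = c₁ → rotTile s₂ yrrybb 3 = c₂ →
      Glued yrrybb cells (rot s₁ s₂ s₃ s₄ s₅) →
        s₁ = r₁ ∧ s₂ = r₂ ∧ s₃ = r₃ ∧ s₄ = r₄ ∧ s₅ = r₅) :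
    ∃ sol : ℤ × ℤ → Option Tile,
      (IsSolution puzzle sol ∧ SolColor sol (0, 0) 3 c₁ ∧ SolColor sol (1, 0) 3 c₂ ∧
        SolColor sol (1, 1) 0 c₂ ∧ SolColor sol (2, 1) 0 c₁) ∧
      ∀ sol' : ℤ × ℤ → Option Tile, IsSolution puzzle sol' →
        SolColor sol' (0, 0) 3 c₁ → SolColor sol' (1, 0) 3 c₂ → sol' = sol := by
  refine ⟨rotatedSol yrrybb cells (rot r₁ r₂ r₃ r₄ r₅), ⟨isSolution_rotatedSol hglued, ?_⟩, ?_⟩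
  · simp [solColor_rotatedSol_iff, cells, rot, hcolors]
  · intro sol' hsol' h₁ h₂
    obtain ⟨k, hk, rfl⟩ := hsol'.exists_eq_rotatedSol
    obtain ⟨e₁, e₂, e₃, e₄, e₅⟩ := hunique _ _ _ _ _ (solColor_rotatedSol_iff.1 h₁).2
      (solColor_rotatedSol_iff.1 h₂).2 ((glued_congr (eqOn_rot k)).1 hk)
    have hkr := eqOn_rot k
    rw [e₁, e₂, e₃, e₄, e₅] at hkr
    exact rotatedSol_congr hkr

end Cross

/-- the three-color CROSS subpuzzle: a left and a right input boundary edge at the bottom, a left and a right output boundary edge at the top; for each pair `(c₁, c₂) ∈ {blue, red}²` there is exactly one solution with colors `c₁`, `c₂` at the left and right input edges, and it has the swapped colors `c₂`, `c₁` at the left and right output edges. -/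
theorem three_color_CROSS_subpuzzle :
    ∃ (P : Puzzle) (iL iR oL oR : ℤ × ℤ),
      IsBoundary P iL 3 ∧ IsBoundary P iR 3 ∧
      IsBoundary P oL 0 ∧ IsBoundary P oR 0 ∧
      iL.1 < iR.1 ∧ oL.1 < oR.1 ∧ iL.2 < oL.2 ∧ iR.2 < oR.2 ∧
      ∀ c₁ ∈ ({Color.blue, Color.red} : Set Color),
        ∀ c₂ ∈ ({Color.blue, Color.red} : Set Color),
          ∃ sol : ℤ × ℤ → Option Tile,
            (IsSolution P sol ∧ SolColor sol iL 3 c₁ ∧ SolColor sol iR 3 c₂ ∧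
              SolColor sol oL 0 c₂ ∧ SolColor sol oR 0 c₁) ∧
            (∀ sol' : ℤ × ℤ → Option Tile,
              IsSolution P sol' → SolColor sol' iL 3 c₁ → SolColor sol' iR 3 c₂ →
                sol' = sol) := by
  refine ⟨Cross.puzzle, (0, 0), (1, 0), (1, 1), (2, 1),
    Puzzle.isBoundary_uniform_iff.2 (by decide), Puzzle.isBoundary_uniform_iff.2 (by decide),
    Puzzle.isBoundary_uniform_iff.2 (by decide), Puzzle.isBoundary_uniform_iff.2 (by decide),
    by decide, by decide, by decide, by decide, ?_⟩
  rintro c₁ (rfl | rfl : c₁ = _ ∨ c₁ = _) c₂ (rfl | rfl : c₂ = _ ∨ c₂ = _)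
  · exact Cross.existsUnique_solution (r₁ := 1) (r₂ := 1) (r₃ := 1) (r₄ := 4) (r₅ := 4)
      (by decide) (by decide) (by decide +kernel)
  · exact Cross.existsUnique_solution (r₁ := 2) (r₂ := 5) (r₃ := 2) (r₄ := 2) (r₅ := 5)
      (by decide) (by decide) (by decide +kernel)
  · exact Cross.existsUnique_solution (r₁ := 5) (r₂ := 2) (r₃ := 5) (r₄ := 5) (r₅ := 2)
      (by decide) (by decide) (by decide +kernel)
  · exact Cross.existsUnique_solution (r₁ := 4) (r₂ := 4) (r₃ := 4) (r₄ := 1) (r₅ := 1)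
      (by decide) (by decide) (by decide +kernel)
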